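/- Let x ∈ ℂⁿ be nonzero, δ ∈ (0, 1), and let S ∈ ℂ^{n×n} satisfy ‖S − 2·x x*‖ ≤ δ·‖x‖₂². Let τ₀ be the largest singular value of S with associated unit left and right singular vectors u₀, v₀. Then τ₀ ≥ (2 − δ)·‖x‖₂², 2·|x* v₀|·‖x‖₂ ≥ (2 − 2δ)·‖x‖₂², and dist²(‖x‖₂·v₀, x) ≤ 2δ·‖x‖₂². -/

import Mathlib

open MeasureTheory ProbabilityTheory Matrix Complex Finset

noncomputable section

/-- The vector in `ℝ^{2n²}` of real and imaginary parts of the entries of a complex matrix. -/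
def coeffVec {n : ℕ} (A : Matrix (Fin n) (Fin n) ℂ) : Fin n × Fin n × Fin 2 → ℝ :=
  fun p => if p.2.2 = (0 : Fin 2) then (A p.1 p.2.1).re else (A p.1 p.2.1).im

/-- A real random variable is sub-Gaussian: its tails are dominated by a Gaussian tail. -/
def IsSubGaussianRV {Ω : Type} [MeasureSpace Ω] (X : Ω → ℝ) : Prop :=
  ∃ K > 0, ∀ t : ℝ, 0 ≤ t →
    (ℙ {ω | t ≤ |X ω|}).toReal ≤ 2 * Real.exp (-(t ^ 2) / K ^ 2)

/-- The rotation-invariant sub-Gaussian measurement model: the matrices `A i` are i.i.d.,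
the vector of real/imaginary parts of the entries has a rotation-invariant distribution,
all one-dimensional marginals are sub-Gaussian, and each coordinate has unit variance. -/
structure RotInvSubGaussian {Ω : Type} [MeasureSpace Ω] {n m : ℕ}
    (A : Fin m → Ω → Matrix (Fin n) (Fin n) ℂ) : Prop where
  prob : IsProbabilityMeasure (ℙ : Measure Ω)
  meas : ∀ i, Measurable fun ω => coeffVec (A i ω)
  indep : iIndepFun (fun i ω => coeffVec (A i ω)) ℙ
  ident : ∀ i j, Measure.map (fun ω => coeffVec (A i ω)) ℙ
    = Measure.map (fun ω => coeffVec (A j ω)) ℙ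
  rotInv : ∀ (i : Fin m) (O : Matrix (Fin n × Fin n × Fin 2) (Fin n × Fin n × Fin 2) ℝ),
    Oᵀ * O = 1 →
    Measure.map (fun ω => O.mulVec (coeffVec (A i ω))) ℙ
      = Measure.map (fun ω => coeffVec (A i ω)) ℙ
  subGaussian : ∀ (i : Fin m) (g : Fin n × Fin n × Fin 2 → ℝ),
    IsSubGaussianRV (fun ω => g ⬝ᵥ coeffVec (A i ω))
  unitVar : ∀ (i : Fin m) (k : Fin n × Fin n × Fin 2), ∫ ω, (coeffVec (A i ω) k) ^ 2 = 1

/-- A matrix acting on `EuclideanSpace`. -/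
def mApp {n : ℕ} (M : Matrix (Fin n) (Fin n) ℂ) (v : EuclideanSpace ℂ (Fin n)) :
    EuclideanSpace ℂ (Fin n) :=
  Matrix.toEuclideanLin M v

/-- `quadForm M u v = u* M v`. -/
def quadForm {n : ℕ} (M : Matrix (Fin n) (Fin n) ℂ) (u v : EuclideanSpace ℂ (Fin n)) : ℂ :=
  inner ℂ u (mApp M v)

/-- The spectral (operator) norm of a complex matrix. -/
def specNorm {n : ℕ} (M : Matrix (Fin n) (Fin n) ℂ) : ℝ :=
  ‖LinearMap.toContinuousLinearMap (Matrix.toEuclideanLin M)‖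

/-- The outer product `q p*`. -/
def outer {n : ℕ} (q p : EuclideanSpace ℂ (Fin n)) : Matrix (Fin n) (Fin n) ℂ :=
  Matrix.vecMulVec (fun r => q r) (fun c => starRingEnd ℂ (p c))

/-- `(1/m) Σᵢ (p* Aᵢ* q) Aᵢ − 2 q p*`. -/
def Gmat {n m : ℕ} (A : Fin m → Matrix (Fin n) (Fin n) ℂ)
    (p q : EuclideanSpace ℂ (Fin n)) : Matrix (Fin n) (Fin n) ℂ :=
  (m : ℂ)⁻¹ • (∑ i, quadForm (A i)ᴴ p q • A i) - (2 : ℂ) • outer q p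

/-- Squared distance up to a global phase. -/
def distSq {n : ℕ} (z x : EuclideanSpace ℂ (Fin n)) : ℝ :=
  ‖z‖ ^ 2 + ‖x‖ ^ 2 - 2 * ‖(inner ℂ z x : ℂ)‖

/-- The Wirtinger flow gradient of the loss `f(z) = (1/m) Σᵢ |z* Aᵢ z − x* Aᵢ x|²`. -/
def wfGrad {n m : ℕ} (A : Fin m → Matrix (Fin n) (Fin n) ℂ)
    (x z : EuclideanSpace ℂ (Fin n)) : EuclideanSpace ℂ (Fin n) :=
  (m : ℂ)⁻¹ • ∑ i,
    ((quadForm (A i)ᴴ z z - quadForm (A i)ᴴ x x) • mApp (A i) z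
      + (quadForm (A i) z z - quadForm (A i) x x) • mApp (A i)ᴴ z)

/-- The spectral initialization matrix `S = (1/m) Σᵢ ȳᵢ Aᵢ` with `yᵢ = x* Aᵢ x`. -/
def Smat {n m : ℕ} (A : Fin m → Matrix (Fin n) (Fin n) ℂ)
    (x : EuclideanSpace ℂ (Fin n)) : Matrix (Fin n) (Fin n) ℂ :=
  (m : ℂ)⁻¹ • ∑ i, starRingEnd ℂ (quadForm (A i) x x) • A i

/-- `v` is a unit right singular vector of `S` associated with the largest singular value
(which equals the spectral norm). -/
def TopRightSingVec {n : ℕ} (S : Matrix (Fin n) (Fin n) ℂ)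
    (v : EuclideanSpace ℂ (Fin n)) : Prop :=
  ‖v‖ = 1 ∧ ∃ u : EuclideanSpace ℂ (Fin n), ‖u‖ = 1 ∧
    mApp S v = (specNorm S : ℂ) • u ∧ mApp Sᴴ u = (specNorm S : ℂ) • v

end

/-!
Write `S = 2 x x* + E` with `‖E‖ ≤ δ ‖x‖²`. Since `‖2 x x*‖ = 2 ‖x‖²`, the triangle inequality
gives `‖S‖ ≥ (2 - δ) ‖x‖²`. On the other hand `‖S‖ = ‖S v₀‖ ≤ ‖E v₀‖ + 2 |x* v₀| ‖x‖`, and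
comparing the two bounds controls `|x* v₀|`, which is all that `dist²(‖x‖ v₀, x)` depends on.
-/

section
variable {n : ℕ}

lemma specNorm_eq_norm_toEuclideanCLM (M : Matrix (Fin n) (Fin n) ℂ) :
    specNorm M = ‖toEuclideanCLM (n := Fin n) (𝕜 := ℂ) M‖ := rfl

lemma mApp_eq_toEuclideanCLM (M : Matrix (Fin n) (Fin n) ℂ) (v : EuclideanSpace ℂ (Fin n)) :
    mApp M v = toEuclideanCLM (n := Fin n) (𝕜 := ℂ) M v := rfl

lemma mApp_sub (A B : Matrix (Fin n) (Fin n) ℂ) (v : EuclideanSpace ℂ (Fin n)) :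
    mApp (A - B) v = mApp A v - mApp B v := by
  simp only [mApp_eq_toEuclideanCLM, map_sub, _root_.sub_apply]

lemma mApp_smul (c : ℂ) (M : Matrix (Fin n) (Fin n) ℂ) (v : EuclideanSpace ℂ (Fin n)) :
    mApp (c • M) v = c • mApp M v := by
  simp only [mApp_eq_toEuclideanCLM, map_smul, _root_.smul_apply]

lemma mApp_outer (q p v : EuclideanSpace ℂ (Fin n)) :
    mApp (outer q p) v = inner ℂ p v • q := by
  ext i
  simp [mApp, outer, mulVec, vecMulVec, dotProduct, inner, Finset.mul_sum, mul_comm, mul_left_comm]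

lemma norm_mApp_le (M : Matrix (Fin n) (Fin n) ℂ) (v : EuclideanSpace ℂ (Fin n)) :
    ‖mApp M v‖ ≤ specNorm M * ‖v‖ :=
  (toEuclideanCLM (n := Fin n) (𝕜 := ℂ) M).le_opNorm v

lemma specNorm_nonneg (M : Matrix (Fin n) (Fin n) ℂ) : 0 ≤ specNorm M := norm_nonneg _

lemma specNorm_le_add_specNorm_sub (A B : Matrix (Fin n) (Fin n) ℂ) :
    specNorm B ≤ specNorm A + specNorm (A - B) := by
  simp only [specNorm_eq_norm_toEuclideanCLM, map_sub]
  exact norm_le_norm_add_norm_sub _ _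

lemma specNorm_smul (c : ℂ) (M : Matrix (Fin n) (Fin n) ℂ) :
    specNorm (c • M) = ‖c‖ * specNorm M := by
  simp only [specNorm_eq_norm_toEuclideanCLM, map_smul, norm_smul]

lemma toEuclideanCLM_outer (q p : EuclideanSpace ℂ (Fin n)) :
    toEuclideanCLM (n := Fin n) (𝕜 := ℂ) (outer q p) = (innerSL ℂ p).smulRight q := by
  ext v : 1
  rw [← mApp_eq_toEuclideanCLM, mApp_outer]
  rfl

lemma specNorm_outer (q p : EuclideanSpace ℂ (Fin n)) : specNorm (outer q p) = ‖p‖ * ‖q‖ := by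
  rw [specNorm_eq_norm_toEuclideanCLM, toEuclideanCLM_outer,
    ContinuousLinearMap.norm_smulRight_apply, innerSL_apply_norm]

lemma TopRightSingVec.norm_mApp {S : Matrix (Fin n) (Fin n) ℂ} {v : EuclideanSpace ℂ (Fin n)}
    (hv : TopRightSingVec S v) : ‖mApp S v‖ = specNorm S := by
  obtain ⟨-, u, hu, hSv, -⟩ := hv
  rw [hSv, norm_smul, hu, mul_one, Complex.norm_real, Real.norm_of_nonneg (specNorm_nonneg S)]

lemma TopRightSingVec.specNorm_le {S : Matrix (Fin n) (Fin n) ℂ} {v : EuclideanSpace ℂ (Fin n)}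
    (hv : TopRightSingVec S v) (B : Matrix (Fin n) (Fin n) ℂ) :
    specNorm S ≤ specNorm (S - B) + ‖mApp B v‖ :=
  calc specNorm S = ‖mApp (S - B) v + mApp B v‖ := by rw [mApp_sub, sub_add_cancel, hv.norm_mApp]
    _ ≤ ‖mApp (S - B) v‖ + ‖mApp B v‖ := norm_add_le _ _
    _ ≤ specNorm (S - B) + ‖mApp B v‖ := by
      grw [norm_mApp_le, hv.1, mul_one]

lemma distSq_norm_smul (x v : EuclideanSpace ℂ (Fin n)) (hv : ‖v‖ = 1) :
    distSq ((‖x‖ : ℂ) • v) x = 2 * ‖x‖ ^ 2 - 2 * ‖x‖ * ‖(inner ℂ x v : ℂ)‖ := by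
  rw [distSq, norm_smul, inner_smul_left, norm_mul, Complex.norm_conj, ← inner_conj_symm,
    Complex.norm_conj, hv, Complex.norm_real, Real.norm_of_nonneg (norm_nonneg _)]
  ring

end

theorem top_singular_vector_close_general {n : ℕ} (x : EuclideanSpace ℂ (Fin n))
    (δ : ℝ) (S : Matrix (Fin n) (Fin n) ℂ)
    (hS : specNorm (S - (2 : ℂ) • outer x x) ≤ δ * ‖x‖ ^ 2)
    (v₀ : EuclideanSpace ℂ (Fin n)) (hv : TopRightSingVec S v₀) :
    (2 - δ) * ‖x‖ ^ 2 ≤ specNorm S ∧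
    (2 - 2 * δ) * ‖x‖ ^ 2 ≤ 2 * ‖(inner ℂ x v₀ : ℂ)‖ * ‖x‖ ∧
    distSq ((‖x‖ : ℂ) • v₀) x ≤ 2 * δ * ‖x‖ ^ 2 := by
  have hlow := specNorm_le_add_specNorm_sub S ((2 : ℂ) • outer x x)
  have hup := hv.specNorm_le ((2 : ℂ) • outer x x)
  rw [specNorm_smul, specNorm_outer, Complex.norm_two] at hlow
  rw [mApp_smul, mApp_outer, norm_smul, norm_smul, Complex.norm_two] at hup
  rw [distSq_norm_smul x v₀ hv.1]
  refine ⟨by linarith, by linarith, by linarith⟩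

/-- If `‖S − 2 x x*‖ ≤ δ ‖x‖²` with `δ ∈ (0,1)` and `x ≠ 0`, then the largest singular
value `τ₀ = ‖S‖` of `S` satisfies `τ₀ ≥ (2 − δ)‖x‖²`, the top right singular vector `v₀`
satisfies `2 |x* v₀| ‖x‖ ≥ (2 − 2δ)‖x‖²`, and `dist²(‖x‖ v₀, x) ≤ 2δ‖x‖²`. -/
theorem top_singular_vector_close {n : ℕ} (x : EuclideanSpace ℂ (Fin n)) (hx : x ≠ 0)
    (δ : ℝ) (hδ : δ ∈ Set.Ioo (0 : ℝ) 1) (S : Matrix (Fin n) (Fin n) ℂ)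
    (hS : specNorm (S - (2 : ℂ) • outer x x) ≤ δ * ‖x‖ ^ 2)
    (v₀ : EuclideanSpace ℂ (Fin n)) (hv : TopRightSingVec S v₀) :
    (2 - δ) * ‖x‖ ^ 2 ≤ specNorm S ∧
    (2 - 2 * δ) * ‖x‖ ^ 2 ≤ 2 * ‖(inner ℂ x v₀ : ℂ)‖ * ‖x‖ ∧
    distSq ((‖x‖ : ℂ) • v₀) x ≤ 2 * δ * ‖x‖ ^ 2 :=
  top_singular_vector_close_general x δ S hS v₀ hv
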